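/- Two substitutions at disjoint spans commute: if [a,b⟩ and [c,d⟩ are spans of D with b ≤ c, and w, w' are strings with δ = |w| - (b-a), then DSyn(DSyn(D,a,b,w), c+δ, d+δ, w') = DSyn(DSyn(D,c,d,w'), a, b, w). -/
import Mathlib


/-- The substring of document `D` at span `[i,j⟩` (1-indexed, `j` exclusive). -/
def docSub {α : Type*} (D : List α) (i j : ℕ) : List α := (D.drop (i - 1)).take (j - i)

/-- `DSyn D a b w` replaces the content of `D` at span `[a,b⟩` by `w`. -/
def DSyn {α : Type*} (D : List α) (a b : ℕ) (w : List α) : List α :=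
  D.take (a - 1) ++ w ++ D.drop (b - 1)

theorem dsyn_comm {α : Type*} (D w w' : List α) (a b c d : ℕ)
    (h1 : 1 ≤ a) (h2 : a ≤ b) (h3 : b ≤ c) (h4 : c ≤ d) (h5 : d ≤ D.length + 1) :
    DSyn (DSyn D a b w) (c + w.length - (b - a)) (d + w.length - (b - a)) w'
      = DSyn (DSyn D c d w') a b w := by
  unfold DSyn
  simp only [List.take_append, List.drop_append,
    List.length_take, List.length_append, List.length_drop]
  rw [min_eq_left (by omega : a - 1 ≤ D.length), min_eq_left (by omega : c - 1 ≤ D.length)]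
  rw [List.take_of_length_le (l := D.take (a-1)) (by simp; omega),
      List.take_of_length_le (l := w) (by omega),
      (by omega : c + w.length - (b - a) - 1 - (a - 1 + w.length) = c - b),
      List.drop_eq_nil_of_le (as := D.take (a-1)) (by simp; omega),
      List.drop_eq_nil_of_le (as := w) (by omega),
      List.drop_drop,
      (by omega : b - 1 + (d + w.length - (b - a) - 1 - (a - 1 + w.length)) = d - 1),
      List.take_take, min_eq_left (by omega : a - 1 ≤ c - 1),
      (by omega : a - 1 - (c - 1) = 0),
      (by omega : a - 1 - (c - 1 + w'.length) = 0),
      List.drop_take,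
      (by omega : c - 1 - (b - 1) = c - b),
      (by omega : b - 1 - (c - 1) = 0),
      (by omega : b - 1 - (c - 1 + w'.length) = 0)]
  simp
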